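/- Let p > 0 and c > 0. Let Q = [0,1]², R = [1/3,2/3]², and for each n ≥ 1 let Q_n = [2^{−n}, 2^{−n+1}]² and let A_n : Q → Q_n be the affine map A_n(x,y) = ((x+1)/2^n, (y+1)/2^n). Suppose (g_n)_{n≥1} is a sequence of homeomorphisms of Q onto itself such that: (i) each g_n equals the identity outside R; (ii) g_n and g_n⁻¹ are Lipschitz with [g_n]_{Lip} ≤ c·n^p and [g_n⁻¹]_{Lip} ≤ c·n^p; and (iii) h_top(g_n) → ∞ as n → ∞. Define f : ℝ² → ℝ² by f = A_n ∘ g_n ∘ A_n⁻¹ on Q_n for each n ≥ 1, and f = identity on the complement of ⋃_n Q_n. Then: f is an orientation-preserving homeomorphism of ℝ² equal to the identity outside Q and mapping Q onto Q; the restriction of f to Q has infinite topological entropy; and there exist constants C > 0 and δ > 0 such that for all z, w ∈ ℝ² with 0 < |z − w| < δ, |f(z) − f(w)| ≤ C·|z − w|·(log(1/|z − w|))^p, and the same bound (with the same C, δ) holds for f⁻¹. In particular, f and f⁻¹ are α-Hölder continuous for every 0 < α < 1. -/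

import Mathlib

open Set Filter

/-- The vector `(1,1) ∈ ℝ²`. -/
noncomputable def onev : EuclideanSpace ℝ (Fin 2) :=
  EuclideanSpace.single 0 1 + EuclideanSpace.single 1 1

/-- The unit square `Q = [0,1]²`. -/
def unitSq : Set (EuclideanSpace ℝ (Fin 2)) := {x | ∀ i, x i ∈ Set.Icc (0 : ℝ) 1}

/-- The middle square `R = [1/3,2/3]²`. -/
def midSq : Set (EuclideanSpace ℝ (Fin 2)) := {x | ∀ i, x i ∈ Set.Icc (1/3 : ℝ) (2/3)}

/-- The dyadic square `Q_n = [2^{-n}, 2^{-n+1}]²`. -/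
def dyadicSq (n : ℕ) : Set (EuclideanSpace ℝ (Fin 2)) :=
  {x | ∀ i, x i ∈ Set.Icc (((2 : ℝ) ^ n)⁻¹) (2 * ((2 : ℝ) ^ n)⁻¹)}

/-- The affine map `A_n(x,y) = ((x+1)/2^n, (y+1)/2^n)`, taking `Q` onto `Q_n`. -/
noncomputable def affSq (n : ℕ) (x : EuclideanSpace ℝ (Fin 2)) : EuclideanSpace ℝ (Fin 2) :=
  ((2 : ℝ) ^ n)⁻¹ • (x + onev)

/-- The inverse `A_n⁻¹(x,y) = (2^n·x - 1, 2^n·y - 1)`. -/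
noncomputable def affSqInv (n : ℕ) (x : EuclideanSpace ℝ (Fin 2)) : EuclideanSpace ℝ (Fin 2) :=
  (2 : ℝ) ^ n • x - onev

/-!
Each `Q_n` carries the copy `A_n ∘ g_n ∘ A_n⁻¹` of `g_n`, conjugate to it by a homothety, so
`h_top(f|Q) ≥ h_top(g_n)` for every `n`. The Lipschitz constant `c nᵖ` of that copy only matters
for two points of `Q_n`, whose distance `d ≤ 2 · 2⁻ⁿ` gives `n ≤ 3 log (1/d)`. Points of different
squares are each moved by at most `2d`: `f` only moves points of the middle squares `A_n(R)`, within
`A_n(R)`, and these are `2⁻ⁿ/3`-far from the complement of `Q_n`. This is the modulus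
`d · log (1/d)ᵖ`, which beats `dᵅ` for every `α < 1`. The inverse is the same construction made
from the `g_n⁻¹`. Finally `f` moves points by a bounded amount, so Alexander's trick
`t • f (t⁻¹ • x)` is an isotopy from the identity to `f`.
-/

open Topology Real Dynamics

namespace InfiniteEntropyHolder

lemma mul_log_one_div_rpow_le {t p α : ℝ} (ht0 : 0 < t) (ht1 : t ≤ 1) (hp : 0 < p) (hα : α < 1) :
    t * log (1 / t) ^ p ≤ (p / (1 - α)) ^ p * t ^ α := by
  set ε := (1 - α) / p
  have hε : 0 < ε := div_pos (by linarith) hp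
  have hlog : log (1 / t) ≤ (1 / t) ^ ε / ε := log_le_rpow_div (by positivity) hε
  have hεp : ε * p = 1 - α := div_mul_cancel₀ _ hp.ne'
  have hrpow : ((1 / t) ^ ε / ε) ^ p = (p / (1 - α)) ^ p * t ^ (α - 1) := by
    rw [div_rpow (by positivity) hε.le, ← rpow_mul (by positivity), one_div, inv_rpow ht0.le,
      ← rpow_neg ht0.le, div_eq_mul_inv, mul_comm, ← inv_rpow hε.le, inv_div, hεp, neg_sub]
  calc t * log (1 / t) ^ p ≤ t * ((p / (1 - α)) ^ p * t ^ (α - 1)) := by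
        rw [← hrpow]
        gcongr
        exact log_nonneg (one_le_one_div ht0 ht1)
    _ = (p / (1 - α)) ^ p * t ^ α := by
        have : t ^ α = t * t ^ (α - 1) := by simpa using rpow_add ht0 1 (α - 1)
        rw [mul_left_comm, this]

lemma dist_le_rpow_of_log_modulus {X : Type*} [MetricSpace X] {F : X → X} {C p α : ℝ}
    (hC : 0 ≤ C) (hp : 0 < p) (hα : α < 1)
    (hmod : ∀ z w, 0 < dist z w → dist z w < 1 / 4 →
      dist (F z) (F w) ≤ C * dist z w * log (1 / dist z w) ^ p)
    (hdisp : ∀ x, dist (F x) x ≤ 1) {z w : X} (hzw : dist z w ≤ 1) :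
    dist (F z) (F w) ≤ (C * (p / (1 - α)) ^ p + 12) * dist z w ^ α := by
  rcases eq_or_lt_of_le (dist_nonneg : 0 ≤ dist z w) with h0 | hpos
  · rw [dist_eq_zero.1 h0.symm, dist_self]
    positivity
  rcases lt_or_ge (dist z w) (1 / 4) with hsmall | hlarge
  · calc dist (F z) (F w) ≤ C * (dist z w * log (1 / dist z w) ^ p) := by
          rw [← mul_assoc]; exact hmod z w hpos hsmall
      _ ≤ C * ((p / (1 - α)) ^ p * dist z w ^ α) :=
          mul_le_mul_of_nonneg_left (mul_log_one_div_rpow_le hpos hzw hp hα) hC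
      _ ≤ (C * (p / (1 - α)) ^ p + 12) * dist z w ^ α := by
          have : 0 ≤ dist z w ^ α := by positivity
          nlinarith
  · calc dist (F z) (F w) ≤ dist (F z) z + dist z w + dist w (F w) := dist_triangle4 _ _ _ _
      _ ≤ 1 + 1 + 1 := by
          gcongr
          · exact hdisp z
          · rw [dist_comm]; exact hdisp w
      _ ≤ 12 * dist z w ^ α := by
          linarith [(by simpa using rpow_le_rpow_of_exponent_ge hpos hzw hα.le :
            dist z w ≤ dist z w ^ α)]
      _ ≤ (C * (p / (1 - α)) ^ p + 12) * dist z w ^ α := by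
          gcongr
          exact le_add_of_nonneg_left (by positivity)

lemma continuous_of_dist_le_mul_rpow {X Y : Type*} [PseudoMetricSpace X] [PseudoMetricSpace Y]
    {F : X → Y} {K α : ℝ} (hα : 0 < α)
    (h : ∀ z w, dist z w ≤ 1 → dist (F z) (F w) ≤ K * dist z w ^ α) : Continuous F := by
  refine continuous_iff_continuousAt.2 fun b => ?_
  rw [ContinuousAt, tendsto_iff_dist_tendsto_zero]
  have hlim : Tendsto (fun x => K * dist x b ^ α) (𝓝 b) (𝓝 0) := by
    have := ((continuous_id.dist continuous_const : Continuous fun x : X => dist x b).rpow_const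
      fun _ => Or.inr hα.le).tendsto b
    simpa [zero_rpow hα.ne'] using this.const_mul K
  refine squeeze_zero' (Eventually.of_forall fun _ => dist_nonneg) ?_ hlim
  filter_upwards [Metric.closedBall_mem_nhds b one_pos] with x hx using h x b hx

lemma one_le_log_one_div {d : ℝ} (hd : 0 < d) (hd4 : d < 1 / 4) : 1 ≤ log (1 / d) := by
  rw [le_log_iff_exp_le (by positivity), le_div_iff₀ hd]
  nlinarith [exp_one_lt_d9]

lemma natCast_le_three_mul_log_one_div {n : ℕ} {d : ℝ} (hd : 0 < d) (hd4 : d < 1 / 4)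
    (hdn : d ≤ 2 * ((2 : ℝ) ^ n)⁻¹) : (n : ℝ) ≤ 3 * log (1 / d) := by
  have hlog2 : 1 / 2 < log 2 := by linarith [log_two_gt_d9]
  have hn : n * log 2 ≤ log 2 + log (1 / d) := by
    rw [← log_pow, ← log_mul two_ne_zero (by positivity)]
    refine log_le_log (by positivity) ?_
    rw [mul_one_div, le_div_iff₀ hd]
    rw [← div_eq_mul_inv, le_div_iff₀ (by positivity)] at hdn
    linarith
  have h4 : 2 * log 2 ≤ log (1 / d) := by
    rw [← log_rpow two_pos]
    refine log_le_log (by positivity) ?_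
    rw [le_div_iff₀ hd, show (2 : ℝ) ^ (2 : ℝ) = 4 by norm_num]
    linarith
  nlinarith

lemma mapsTo_of_injOn_of_eqOn_diff {α : Type*} {g : α → α} {s t : Set α} (hst : s ⊆ t)
    (hmaps : MapsTo g t t) (hinj : InjOn g t) (hfix : ∀ x ∈ t \ s, g x = x) :
    MapsTo g s s := by
  intro x hx
  by_contra hgx
  have hx' := hst hx
  have h := hinj (hmaps hx') hx' (hfix _ ⟨hmaps hx', hgx⟩)
  exact hgx (by rwa [h])

lemma coverEntropy_eq_of_eqOn {X : Type*} [UniformSpace X] {S T : X → X} {A : Set X}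
    (hS : MapsTo S A A) (h : EqOn S T A) : coverEntropy S A = coverEntropy T A := by
  have hT : MapsTo T A A := fun x hx => h hx ▸ hS hx
  rw [← coverEntropy_restrict hS, ← coverEntropy_restrict hT]
  congr 1
  funext x
  exact Subtype.ext (h x.2)

section AlexanderTrick

variable {E : Type*} [NormedAddCommGroup E] [NormedSpace ℝ E] {f : E → E}

/-- Alexander's isotopy `t • f (t⁻¹ • x)`, written as a perturbation of `x` so that it is the
identity at `t = 0`, where `0⁻¹ = 0`. -/
noncomputable def alexanderIsotopy (f : E → E) (t : ℝ) (x : E) : E :=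
  x + t • (f (t⁻¹ • x) - t⁻¹ • x)

@[simp]
lemma alexanderIsotopy_zero : alexanderIsotopy f 0 = id := by
  ext x; simp [alexanderIsotopy]

@[simp]
lemma alexanderIsotopy_one : alexanderIsotopy f 1 = f := by
  ext x; simp [alexanderIsotopy]

lemma alexanderIsotopy_of_ne_zero {t : ℝ} (ht : t ≠ 0) :
    alexanderIsotopy f t = fun x => t • f (t⁻¹ • x) := by
  ext x; simp [alexanderIsotopy, smul_sub, smul_inv_smul₀ ht]

lemma isHomeomorph_alexanderIsotopy (hf : IsHomeomorph f) (t : ℝ) :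
    IsHomeomorph (alexanderIsotopy f t) := by
  rcases eq_or_ne t 0 with rfl | ht
  · simpa using IsHomeomorph.id
  rw [alexanderIsotopy_of_ne_zero ht]
  exact (Homeomorph.smulOfNeZero t ht).isHomeomorph.comp
    (hf.comp (Homeomorph.smulOfNeZero t⁻¹ (inv_ne_zero ht)).isHomeomorph)

lemma continuous_alexanderIsotopy (hf : Continuous f) {M : ℝ} (hM : ∀ x, dist (f x) x ≤ M) :
    Continuous fun q : ℝ × E => alexanderIsotopy f q.1 q.2 := by
  refine continuous_iff_continuousAt.2 fun ⟨t₀, x₀⟩ => ?_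
  rcases eq_or_ne t₀ 0 with rfl | ht
  · have hsmall : Tendsto (fun q : ℝ × E => q.1 • (f (q.1⁻¹ • q.2) - q.1⁻¹ • q.2))
        (𝓝 (0, x₀)) (𝓝 0) := by
      refine squeeze_zero_norm (a := fun q => |q.1| * M) (fun q => ?_) ?_
      · rw [norm_smul, Real.norm_eq_abs, ← dist_eq_norm]
        exact mul_le_mul_of_nonneg_left (hM _) (abs_nonneg _)
      · simpa using (by fun_prop : Continuous fun q : ℝ × E => |q.1| * M).tendsto (0, x₀)
    simpa [ContinuousAt, alexanderIsotopy] using (continuous_snd.tendsto _).add hsmall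
  · have hinv : ContinuousAt (fun q : ℝ × E => q.1⁻¹) (t₀, x₀) :=
      continuous_fst.continuousAt.inv₀ ht
    have hy : ContinuousAt (fun q : ℝ × E => q.1⁻¹ • q.2) (t₀, x₀) :=
      hinv.smul continuous_snd.continuousAt
    exact continuous_snd.continuousAt.add (continuous_fst.continuousAt.smul
      ((hf.continuousAt.comp hy).sub hy))

end AlexanderTrick

local notation "ℝ²" => EuclideanSpace ℝ (Fin 2)

section Squares

variable {n m : ℕ} {x y : ℝ²}

lemma onev_apply (i : Fin 2) : onev i = 1 := by
  fin_cases i <;> simp [onev]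

lemma affSq_apply (n : ℕ) (x : ℝ²) (i : Fin 2) : affSq n x i = ((2 : ℝ) ^ n)⁻¹ * (x i + 1) := by
  simp [affSq, onev_apply]
  ring

lemma affSqInv_apply (n : ℕ) (x : ℝ²) (i : Fin 2) : affSqInv n x i = 2 ^ n * x i - 1 := by
  simp [affSqInv, onev_apply]

@[simp]
lemma affSq_affSqInv (n : ℕ) (x : ℝ²) : affSq n (affSqInv n x) = x := by
  simp [affSq, affSqInv]

@[simp]
lemma affSqInv_affSq (n : ℕ) (x : ℝ²) : affSqInv n (affSq n x) = x := by
  simp [affSq, affSqInv]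

lemma dist_affSq (n : ℕ) (x y : ℝ²) :
    dist (affSq n x) (affSq n y) = ((2 : ℝ) ^ n)⁻¹ * dist x y := by
  rw [affSq, affSq, dist_smul₀, dist_add_right, norm_inv, norm_pow, Real.norm_two]

lemma dist_affSqInv (n : ℕ) (x y : ℝ²) :
    dist (affSqInv n x) (affSqInv n y) = 2 ^ n * dist x y := by
  rw [affSqInv, affSqInv, dist_sub_right, dist_smul₀, norm_pow, Real.norm_two]

lemma affSq_mem_dyadicSq_iff : affSq n x ∈ dyadicSq n ↔ x ∈ unitSq := by
  have hs : (0 : ℝ) < ((2 : ℝ) ^ n)⁻¹ := by positivity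
  refine forall_congr' fun i => ?_
  rw [affSq_apply, mem_Icc, mem_Icc]
  constructor
  · rintro ⟨h₁, h₂⟩
    constructor <;> nlinarith
  · rintro ⟨h₁, h₂⟩
    constructor <;> nlinarith

lemma affSqInv_mem_unitSq (hx : x ∈ dyadicSq n) : affSqInv n x ∈ unitSq := by
  rwa [← affSq_mem_dyadicSq_iff, affSq_affSqInv]

lemma image_affSqInv_dyadicSq (n : ℕ) : affSqInv n '' dyadicSq n = unitSq :=
  Subset.antisymm (image_subset_iff.2 fun _ => affSqInv_mem_unitSq)
    fun y hy => ⟨affSq n y, affSq_mem_dyadicSq_iff.2 hy, affSqInv_affSq n y⟩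

lemma midSq_subset_unitSq : midSq ⊆ unitSq :=
  fun _ hx i => ⟨by linarith [(hx i).1], by linarith [(hx i).2]⟩

lemma inv_two_pow_le_half (hn : 1 ≤ n) : ((2 : ℝ) ^ n)⁻¹ ≤ 1 / 2 := by
  rw [one_div]
  exact inv_anti₀ two_pos (by simpa using pow_le_pow_right₀ one_le_two hn)

lemma dyadicSq_subset_unitSq (hn : 1 ≤ n) : dyadicSq n ⊆ unitSq := fun x hx i =>
  ⟨le_trans (by positivity) (hx i).1, by linarith [(hx i).2, inv_two_pow_le_half hn]⟩

lemma mem_dyadicSq_of_affSqInv_mem_midSq (hx : affSqInv n x ∈ midSq) : x ∈ dyadicSq n := by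
  rw [← affSq_affSqInv n x, affSq_mem_dyadicSq_iff]; exact midSq_subset_unitSq hx

lemma apply_mem_Icc_of_affSqInv_mem_midSq (hx : affSqInv n x ∈ midSq) (i : Fin 2) :
    x i ∈ Icc (4 / 3 * ((2 : ℝ) ^ n)⁻¹) (5 / 3 * ((2 : ℝ) ^ n)⁻¹) := by
  have hs : (0 : ℝ) < ((2 : ℝ) ^ n)⁻¹ := by positivity
  have h := hx i
  rw [← affSq_affSqInv n x, affSq_apply]
  constructor <;> nlinarith [h.1, h.2]

lemma dist_le_two_mul_of_forall_abs_sub_le {t : ℝ} (ht : 0 ≤ t)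
    (h : ∀ i, |x i - y i| ≤ t) : dist x y ≤ 2 * t := by
  have hsq : dist x y ^ 2 ≤ (2 * t) ^ 2 := by
    rw [EuclideanSpace.dist_eq, sq_sqrt (by positivity), Fin.sum_univ_two, Real.dist_eq,
      Real.dist_eq, sq_abs, sq_abs]
    nlinarith [sq_abs (x 0 - y 0), sq_abs (x 1 - y 1), abs_nonneg (x 0 - y 0),
      abs_nonneg (x 1 - y 1), h 0, h 1]
  exact (pow_le_pow_iff_left₀ dist_nonneg (by positivity) two_ne_zero).1 hsq

lemma abs_sub_apply_le_dist (x y : ℝ²) (i : Fin 2) : |x i - y i| ≤ dist x y := by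
  simpa [Real.dist_eq] using PiLp.dist_apply_le x y i

lemma dist_le_of_mem_dyadicSq (hx : x ∈ dyadicSq n) (hy : y ∈ dyadicSq n) :
    dist x y ≤ 2 * ((2 : ℝ) ^ n)⁻¹ :=
  dist_le_two_mul_of_forall_abs_sub_le (by positivity) fun i =>
    abs_sub_le_iff.2 ⟨by linarith [(hx i).2, (hy i).1], by linarith [(hx i).1, (hy i).2]⟩

lemma dist_le_of_affSqInv_mem_midSq (hx : affSqInv n x ∈ midSq) (hy : affSqInv n y ∈ midSq) :
    dist x y ≤ 2 * (1 / 3 * ((2 : ℝ) ^ n)⁻¹) := by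
  refine dist_le_two_mul_of_forall_abs_sub_le (by positivity) fun i => ?_
  have hxi := apply_mem_Icc_of_affSqInv_mem_midSq hx i
  have hyi := apply_mem_Icc_of_affSqInv_mem_midSq hy i
  exact abs_sub_le_iff.2 ⟨by linarith [hxi.2, hyi.1], by linarith [hxi.1, hyi.2]⟩

lemma le_dist_of_affSqInv_mem_midSq (hx : affSqInv n x ∈ midSq) (hy : y ∉ dyadicSq n) :
    1 / 3 * ((2 : ℝ) ^ n)⁻¹ ≤ dist x y := by
  obtain ⟨i, hi⟩ := not_forall.1 hy
  have hxi := apply_mem_Icc_of_affSqInv_mem_midSq hx i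
  refine le_trans ?_ (abs_sub_apply_le_dist x y i)
  rcases not_and_or.1 hi with hi | hi
  · exact le_abs.2 (Or.inl (by linarith [hxi.1, not_le.1 hi]))
  · exact le_abs.2 (Or.inr (by linarith [hxi.2, not_le.1 hi]))

lemma two_mul_inv_two_pow_le (h : m < n) : 2 * ((2 : ℝ) ^ n)⁻¹ ≤ ((2 : ℝ) ^ m)⁻¹ := by
  have : (2 : ℝ) ^ (m + 1) ≤ 2 ^ n := pow_le_pow_right₀ one_le_two h
  calc 2 * ((2 : ℝ) ^ n)⁻¹ ≤ 2 * ((2 : ℝ) ^ (m + 1))⁻¹ := by gcongr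
    _ = ((2 : ℝ) ^ m)⁻¹ := by rw [pow_succ, mul_inv]; ring

lemma eq_of_affSqInv_mem_midSq_of_mem_dyadicSq (hx : affSqInv n x ∈ midSq)
    (hm : x ∈ dyadicSq m) : m = n := by
  have hx0 := apply_mem_Icc_of_affSqInv_mem_midSq hx 0
  have hm0 := hm 0
  have hs : (0 : ℝ) < ((2 : ℝ) ^ n)⁻¹ := by positivity
  rcases lt_trichotomy m n with h | h | h
  · linarith [two_mul_inv_two_pow_le h, hx0.2, hm0.1]
  · exact h
  · linarith [two_mul_inv_two_pow_le h, hx0.1, hm0.2]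

end Squares

structure IsDyadicPatch (G : ℕ → ℝ² → ℝ²) (F : ℝ² → ℝ²) : Prop where
  eq_on : ∀ n, 1 ≤ n → ∀ x ∈ dyadicSq n, F x = affSq n (G n (affSqInv n x))
  eq_self : ∀ x, (∀ n, 1 ≤ n → x ∉ dyadicSq n) → F x = x

open Classical in
/-- The choice of `n` is immaterial once each `G n` fixes `Q \ R`: distinct dyadic squares meet
only outside the rescaled middle squares `A_n(R)`. -/
noncomputable def dyadicPatch (G : ℕ → ℝ² → ℝ²) (x : ℝ²) : ℝ² :=
  if h : ∃ n, 1 ≤ n ∧ x ∈ dyadicSq n then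
    affSq h.choose (G h.choose (affSqInv h.choose x))
  else x

section Patch

variable {G G' : ℕ → ℝ² → ℝ²} {F F' : ℝ² → ℝ²} {n : ℕ} {x : ℝ²}

lemma affSq_apply_affSqInv_of_notMem_midSq (hG : ∀ y ∈ unitSq \ midSq, G n y = y)
    (hx : x ∈ dyadicSq n) (hmid : affSqInv n x ∉ midSq) :
    affSq n (G n (affSqInv n x)) = x := by
  rw [hG _ ⟨affSqInv_mem_unitSq hx, hmid⟩, affSq_affSqInv]

lemma isDyadicPatch_dyadicPatch (hG : ∀ n, 1 ≤ n → ∀ y ∈ unitSq \ midSq, G n y = y) :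
    IsDyadicPatch G (dyadicPatch G) := by
  refine ⟨fun n hn x hx => ?_, fun x hx => dif_neg fun ⟨n, hn, hxn⟩ => hx n hn hxn⟩
  have hex : ∃ k, 1 ≤ k ∧ x ∈ dyadicSq k := ⟨n, hn, hx⟩
  obtain ⟨hk, hxk⟩ := hex.choose_spec
  rw [dyadicPatch, dif_pos hex]
  rcases eq_or_ne hex.choose n with h | h
  · rw [h]
  rw [affSq_apply_affSqInv_of_notMem_midSq (hG _ hk) hxk
      fun hmid => h (eq_of_affSqInv_mem_midSq_of_mem_dyadicSq hmid hx).symm,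
    affSq_apply_affSqInv_of_notMem_midSq (hG n hn) hx
      fun hmid => h (eq_of_affSqInv_mem_midSq_of_mem_dyadicSq hmid hxk)]

namespace IsDyadicPatch

lemma apply_eq_self_of_notMem_unitSq (hF : IsDyadicPatch G F) (hx : x ∉ unitSq) : F x = x :=
  hF.eq_self x fun _ hn hxn => hx (dyadicSq_subset_unitSq hn hxn)

lemma mapsTo_unitSq (hF : IsDyadicPatch G F) (hG : ∀ n, 1 ≤ n → MapsTo (G n) unitSq unitSq) :
    MapsTo F unitSq unitSq := by
  intro x hx
  by_cases h : ∃ n, 1 ≤ n ∧ x ∈ dyadicSq n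
  · obtain ⟨n, hn, hxn⟩ := h
    rw [hF.eq_on n hn x hxn]
    exact dyadicSq_subset_unitSq hn
      (affSq_mem_dyadicSq_iff.2 (hG n hn (affSqInv_mem_unitSq hxn)))
  · rwa [hF.eq_self x fun n hn hxn => h ⟨n, hn, hxn⟩]

lemma leftInverse (hF : IsDyadicPatch G F) (hF' : IsDyadicPatch G' F')
    (hG : ∀ n, 1 ≤ n → MapsTo (G n) unitSq unitSq)
    (hinv : ∀ n, 1 ≤ n → LeftInvOn (G' n) (G n) unitSq) : Function.LeftInverse F' F := by
  intro x
  by_cases h : ∃ n, 1 ≤ n ∧ x ∈ dyadicSq n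
  · obtain ⟨n, hn, hxn⟩ := h
    have hu := affSqInv_mem_unitSq hxn
    have hFx : F x ∈ dyadicSq n := by
      rw [hF.eq_on n hn x hxn]; exact affSq_mem_dyadicSq_iff.2 (hG n hn hu)
    rw [hF'.eq_on n hn _ hFx, hF.eq_on n hn x hxn, affSqInv_affSq, hinv n hn hu, affSq_affSqInv]
  · have h' : ∀ n, 1 ≤ n → x ∉ dyadicSq n := fun n hn hxn => h ⟨n, hn, hxn⟩
    rw [hF.eq_self x h', hF'.eq_self x h']

lemma dist_apply_le_of_mem_dyadicSq (hF : IsDyadicPatch G F) (hn : 1 ≤ n) {K : ℝ}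
    (hG : ∀ x ∈ unitSq, ∀ y ∈ unitSq, dist (G n x) (G n y) ≤ K * dist x y)
    {z w : ℝ²} (hz : z ∈ dyadicSq n) (hw : w ∈ dyadicSq n) :
    dist (F z) (F w) ≤ K * dist z w := by
  have h := hG _ (affSqInv_mem_unitSq hz) _ (affSqInv_mem_unitSq hw)
  rw [dist_affSqInv] at h
  rw [hF.eq_on n hn z hz, hF.eq_on n hn w hw, dist_affSq]
  calc ((2 : ℝ) ^ n)⁻¹ * dist (G n (affSqInv n z)) (G n (affSqInv n w))
      ≤ ((2 : ℝ) ^ n)⁻¹ * (K * (2 ^ n * dist z w)) := by gcongr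
    _ = K * dist z w := by field_simp

/-- `F` moves a point of `A_n(R)` inside `A_n(R)` and fixes every other point. -/
lemma dist_apply_self_le (hF : IsDyadicPatch G F)
    (hGsupp : ∀ n, 1 ≤ n → ∀ y ∈ unitSq \ midSq, G n y = y)
    (hGmid : ∀ n, 1 ≤ n → MapsTo (G n) midSq midSq) {D : ℝ} (hD : 0 ≤ D)
    (h : ∀ n, 1 ≤ n → affSqInv n x ∈ midSq → 1 / 3 * ((2 : ℝ) ^ n)⁻¹ ≤ D) :
    dist (F x) x ≤ 2 * D := by
  by_cases hmov : ∃ n, 1 ≤ n ∧ affSqInv n x ∈ midSq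
  · obtain ⟨n, hn, hmid⟩ := hmov
    have hFx : affSqInv n (F x) ∈ midSq := by
      rw [hF.eq_on n hn x (mem_dyadicSq_of_affSqInv_mem_midSq hmid), affSqInv_affSq]
      exact hGmid n hn hmid
    have := dist_le_of_affSqInv_mem_midSq hFx hmid
    linarith [h n hn hmid]
  · have hfix : F x = x := by
      by_cases hd : ∃ n, 1 ≤ n ∧ x ∈ dyadicSq n
      · obtain ⟨n, hn, hxn⟩ := hd
        rw [hF.eq_on n hn x hxn]
        exact affSq_apply_affSqInv_of_notMem_midSq (hGsupp n hn) hxn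
          fun hmid => hmov ⟨n, hn, hmid⟩
      · exact hF.eq_self x fun n hn hxn => hd ⟨n, hn, hxn⟩
    rw [hfix, dist_self]
    positivity

lemma dist_apply_self_le_one (hF : IsDyadicPatch G F)
    (hGsupp : ∀ n, 1 ≤ n → ∀ y ∈ unitSq \ midSq, G n y = y)
    (hGmid : ∀ n, 1 ≤ n → MapsTo (G n) midSq midSq) (x : ℝ²) : dist (F x) x ≤ 1 := by
  have h := hF.dist_apply_self_le hGsupp hGmid (x := x) (D := 1 / 2) (by norm_num)
    fun n hn _ => by linarith [inv_two_pow_le_half hn]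
  linarith

lemma dist_apply_self_le_two_mul_dist (hF : IsDyadicPatch G F)
    (hGsupp : ∀ n, 1 ≤ n → ∀ y ∈ unitSq \ midSq, G n y = y)
    (hGmid : ∀ n, 1 ≤ n → MapsTo (G n) midSq midSq) {w : ℝ²}
    (h : ∀ n, 1 ≤ n → x ∈ dyadicSq n → w ∉ dyadicSq n) : dist (F x) x ≤ 2 * dist x w :=
  hF.dist_apply_self_le hGsupp hGmid dist_nonneg fun n hn hmid =>
    le_dist_of_affSqInv_mem_midSq hmid (h n hn (mem_dyadicSq_of_affSqInv_mem_midSq hmid))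

/-- The modulus of continuity `t · log (1/t) ^ p`: a pair of points either shares a dyadic square
`Q_n`, whose Lipschitz constant `c nᵖ` is controlled by `log (1/d)`, or both points are displaced
by at most twice their distance. -/
lemma dist_le_mul_log_one_div_rpow (hF : IsDyadicPatch G F) {c p : ℝ} (hc : 0 ≤ c) (hp : 0 ≤ p)
    (hGsupp : ∀ n, 1 ≤ n → ∀ y ∈ unitSq \ midSq, G n y = y)
    (hGmid : ∀ n, 1 ≤ n → MapsTo (G n) midSq midSq)
    (hGlip : ∀ n : ℕ, 1 ≤ n → ∀ x ∈ unitSq, ∀ y ∈ unitSq,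
      dist (G n x) (G n y) ≤ c * (n : ℝ) ^ p * dist x y)
    {z w : ℝ²} (hd : 0 < dist z w) (hd4 : dist z w < 1 / 4) :
    dist (F z) (F w) ≤ (c * 3 ^ p + 5) * dist z w * log (1 / dist z w) ^ p := by
  set d := dist z w
  have hL : 1 ≤ log (1 / d) := one_le_log_one_div hd hd4
  have hLp : 1 ≤ log (1 / d) ^ p := one_le_rpow hL hp
  have hc3 : 0 ≤ c * 3 ^ p := by positivity
  by_cases hzw : ∃ n, 1 ≤ n ∧ z ∈ dyadicSq n ∧ w ∈ dyadicSq n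
  · obtain ⟨n, hn, hz, hw⟩ := hzw
    have hn3 : (n : ℝ) ≤ 3 * log (1 / d) :=
      natCast_le_three_mul_log_one_div hd hd4 (dist_le_of_mem_dyadicSq hz hw)
    calc dist (F z) (F w) ≤ c * (n : ℝ) ^ p * d :=
          hF.dist_apply_le_of_mem_dyadicSq hn (hGlip n hn) hz hw
      _ ≤ c * (3 * log (1 / d)) ^ p * d := by gcongr
      _ = c * 3 ^ p * d * log (1 / d) ^ p := by rw [mul_rpow (by norm_num) (by linarith)]; ring
      _ ≤ (c * 3 ^ p + 5) * d * log (1 / d) ^ p := by gcongr; linarith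
  · have hz := hF.dist_apply_self_le_two_mul_dist hGsupp hGmid (x := z) (w := w)
      fun n hn hz hw => hzw ⟨n, hn, hz, hw⟩
    have hw := hF.dist_apply_self_le_two_mul_dist hGsupp hGmid (x := w) (w := z)
      fun n hn hw hz => hzw ⟨n, hn, hz, hw⟩
    rw [dist_comm w z, dist_comm (F w)] at hw
    calc dist (F z) (F w) ≤ dist (F z) z + d + dist w (F w) := dist_triangle4 _ _ _ _
      _ ≤ 5 * d := by linarith
      _ ≤ (c * 3 ^ p + 5) * d * log (1 / d) ^ p := by
          nlinarith [mul_nonneg (mul_nonneg hc3 hd.le) (by linarith : 0 ≤ log (1 / d) ^ p)]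

lemma dist_le_mul_rpow (hF : IsDyadicPatch G F) {c p : ℝ} (hc : 0 ≤ c) (hp : 0 < p)
    (hGsupp : ∀ n, 1 ≤ n → ∀ y ∈ unitSq \ midSq, G n y = y)
    (hGmid : ∀ n, 1 ≤ n → MapsTo (G n) midSq midSq)
    (hGlip : ∀ n : ℕ, 1 ≤ n → ∀ x ∈ unitSq, ∀ y ∈ unitSq,
      dist (G n x) (G n y) ≤ c * (n : ℝ) ^ p * dist x y)
    {α : ℝ} (hα : α < 1) {z w : ℝ²} (hzw : dist z w ≤ 1) :
    dist (F z) (F w) ≤ ((c * 3 ^ p + 5) * (p / (1 - α)) ^ p + 12) * dist z w ^ α :=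
  dist_le_rpow_of_log_modulus (by positivity) hp hα
    (fun _ _ => hF.dist_le_mul_log_one_div_rpow hc hp.le hGsupp hGmid hGlip)
    (hF.dist_apply_self_le_one hGsupp hGmid) hzw

lemma continuous (hF : IsDyadicPatch G F) {c p : ℝ} (hc : 0 ≤ c) (hp : 0 < p)
    (hGsupp : ∀ n, 1 ≤ n → ∀ y ∈ unitSq \ midSq, G n y = y)
    (hGmid : ∀ n, 1 ≤ n → MapsTo (G n) midSq midSq)
    (hGlip : ∀ n : ℕ, 1 ≤ n → ∀ x ∈ unitSq, ∀ y ∈ unitSq,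
      dist (G n x) (G n y) ≤ c * (n : ℝ) ^ p * dist x y) : Continuous F :=
  continuous_of_dist_le_mul_rpow one_half_pos fun _ _ =>
    hF.dist_le_mul_rpow hc hp hGsupp hGmid hGlip one_half_lt_one

lemma coverEntropy_le (hF : IsDyadicPatch G F) (hn : 1 ≤ n) (hG : MapsTo (G n) unitSq unitSq) :
    coverEntropy (G n) unitSq ≤ coverEntropy F unitSq := by
  set Gt : ℝ² → ℝ² := fun x => affSqInv n (F (affSq n x))
  have hsemi : Function.Semiconj (affSqInv n) F Gt := fun x => by simp only [Gt, affSq_affSqInv]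
  have heq : EqOn (G n) Gt unitSq := fun x hx => by
    simp only [Gt, hF.eq_on n hn _ (affSq_mem_dyadicSq_iff.2 hx), affSqInv_affSq]
  have huc : UniformContinuous (affSqInv n) :=
    LipschitzWith.uniformContinuous (K := 2 ^ n) <| LipschitzWith.of_dist_le_mul fun x y => by
      simp [dist_affSqInv]
  calc coverEntropy (G n) unitSq = coverEntropy Gt (affSqInv n '' dyadicSq n) := by
        rw [image_affSqInv_dyadicSq, coverEntropy_eq_of_eqOn hG heq]
    _ ≤ coverEntropy F (dyadicSq n) := coverEntropy_image_le_of_uniformContinuous hsemi huc _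
    _ ≤ coverEntropy F unitSq := coverEntropy_monotone F (dyadicSq_subset_unitSq hn)

end IsDyadicPatch

end Patch

end InfiniteEntropyHolder

open InfiniteEntropyHolder

theorem infinite_entropy_holder_example_general (p c : ℝ) (hp : 0 < p) (hc : 0 < c)
    (g gi : ℕ → EuclideanSpace ℝ (Fin 2) → EuclideanSpace ℝ (Fin 2))
    (hbij : ∀ n, 1 ≤ n → Set.BijOn (g n) unitSq unitSq)
    (hginv : ∀ n, 1 ≤ n → Set.InvOn (gi n) (g n) unitSq unitSq)
    (hsupp : ∀ n, 1 ≤ n → ∀ x ∈ unitSq \ midSq, g n x = x)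
    (hlip : ∀ n : ℕ, 1 ≤ n → ∀ x ∈ unitSq, ∀ y ∈ unitSq,
      dist (g n x) (g n y) ≤ c * (n : ℝ) ^ p * dist x y)
    (hlipi : ∀ n : ℕ, 1 ≤ n → ∀ x ∈ unitSq, ∀ y ∈ unitSq,
      dist (gi n x) (gi n y) ≤ c * (n : ℝ) ^ p * dist x y)
    (hent : Tendsto (fun n => Dynamics.coverEntropy (g n) unitSq) atTop (nhds ⊤))
    (f : EuclideanSpace ℝ (Fin 2) → EuclideanSpace ℝ (Fin 2))
    (hfdef : ∀ n, 1 ≤ n → ∀ x ∈ dyadicSq n, f x = affSq n (g n (affSqInv n x)))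
    (hfid : ∀ x, (∀ n, 1 ≤ n → x ∉ dyadicSq n) → f x = x) :
    ∃ (fi : EuclideanSpace ℝ (Fin 2) → EuclideanSpace ℝ (Fin 2))
      (H : ℝ → EuclideanSpace ℝ (Fin 2) → EuclideanSpace ℝ (Fin 2)),
      Continuous f ∧ Continuous fi ∧
      Function.LeftInverse fi f ∧ Function.RightInverse fi f ∧
      -- orientation preserving: `f` is isotopic to the identity through homeomorphisms
      Continuous (fun q : ℝ × EuclideanSpace ℝ (Fin 2) => H q.1 q.2) ∧
      (∀ x, H 0 x = x) ∧ (∀ x, H 1 x = f x) ∧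
      (∀ t ∈ Set.Icc (0 : ℝ) 1, IsHomeomorph (H t)) ∧
      -- `f` is the identity off `Q` and maps `Q` onto `Q`
      (∀ x ∉ unitSq, f x = x) ∧ f '' unitSq = unitSq ∧
      -- the restriction of `f` to `Q` has infinite topological entropy
      Dynamics.coverEntropy f unitSq = ⊤ ∧
      -- modulus of continuity `Λ_p(t) = t |log t|^p` for `f` and `f⁻¹`
      (∃ C δ : ℝ, 0 < C ∧ 0 < δ ∧ ∀ z w, 0 < dist z w → dist z w < δ →
        dist (f z) (f w) ≤ C * dist z w * Real.log (1 / dist z w) ^ p ∧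
        dist (fi z) (fi w) ≤ C * dist z w * Real.log (1 / dist z w) ^ p) ∧
      -- `f` and `f⁻¹` are `α`-Hölder continuous for every `0 < α < 1`
      (∀ α : ℝ, 0 < α → α < 1 → ∃ K : ℝ, 0 < K ∧ ∀ z w, dist z w ≤ 1 →
        dist (f z) (f w) ≤ K * dist z w ^ α ∧ dist (fi z) (fi w) ≤ K * dist z w ^ α) := by
  have hgmaps : ∀ n, 1 ≤ n → MapsTo (g n) unitSq unitSq := fun n hn => (hbij n hn).mapsTo
  have hgi_bij : ∀ n, 1 ≤ n → BijOn (gi n) unitSq unitSq := fun n hn =>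
    (hbij n hn).symm (hginv n hn).symm
  have hgi_supp : ∀ n, 1 ≤ n → ∀ y ∈ unitSq \ midSq, gi n y = y := fun n hn y hy => by
    simpa [hsupp n hn y hy] using (hginv n hn).1 hy.1
  have hgmid : ∀ n, 1 ≤ n → MapsTo (g n) midSq midSq := fun n hn =>
    mapsTo_of_injOn_of_eqOn_diff midSq_subset_unitSq (hgmaps n hn) (hbij n hn).injOn (hsupp n hn)
  have hgimid : ∀ n, 1 ≤ n → MapsTo (gi n) midSq midSq := fun n hn =>
    mapsTo_of_injOn_of_eqOn_diff midSq_subset_unitSq (hgi_bij n hn).mapsTo (hgi_bij n hn).injOn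
      (hgi_supp n hn)
  set fi := dyadicPatch gi
  have hf : IsDyadicPatch g f := ⟨hfdef, hfid⟩
  have hfi : IsDyadicPatch gi fi := isDyadicPatch_dyadicPatch hgi_supp
  have hleft : Function.LeftInverse fi f := hf.leftInverse hfi hgmaps fun n hn => (hginv n hn).1
  have hright : Function.RightInverse fi f :=
    hfi.leftInverse hf (fun n hn => (hgi_bij n hn).mapsTo) fun n hn => (hginv n hn).2
  have hfc := hf.continuous hc.le hp hsupp hgmid hlip
  have hfic := hfi.continuous hc.le hp hgi_supp hgimid hlipi
  refine ⟨fi, alexanderIsotopy f, hfc, hfic, hleft, hright,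
    continuous_alexanderIsotopy hfc (hf.dist_apply_self_le_one hsupp hgmid), by simp, by simp,
    fun t _ => isHomeomorph_alexanderIsotopy
      (isHomeomorph_iff_exists_inverse.2 ⟨hfc, fi, hleft, hright, hfic⟩) t,
    fun x => hf.apply_eq_self_of_notMem_unitSq, ?_, ?_,
    ⟨c * 3 ^ p + 5, 1 / 4, by positivity, by norm_num, fun z w h0 h4 =>
      ⟨hf.dist_le_mul_log_one_div_rpow hc.le hp.le hsupp hgmid hlip h0 h4,
        hfi.dist_le_mul_log_one_div_rpow hc.le hp.le hgi_supp hgimid hlipi h0 h4⟩⟩,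
    fun α _ hα => ⟨_, ?_, fun z w h =>
      ⟨hf.dist_le_mul_rpow hc.le hp hsupp hgmid hlip hα h,
        hfi.dist_le_mul_rpow hc.le hp hgi_supp hgimid hlipi hα h⟩⟩⟩
  · exact (hf.mapsTo_unitSq hgmaps).image_subset.antisymm fun y hy =>
      ⟨fi y, hfi.mapsTo_unitSq (fun n hn => (hgi_bij n hn).mapsTo) hy, hright y⟩
  · exact top_le_iff.1 (le_of_tendsto hent
      (eventually_atTop.2 ⟨1, fun n hn => hf.coverEntropy_le hn (hgmaps n hn)⟩))
  · have := rpow_nonneg (div_nonneg hp.le (sub_nonneg.2 hα.le)) p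
    positivity

/-- **Planar homeomorphisms with infinite entropy which are Hölder of every exponent**:
let `p, c > 0` and let `(g_n)_{n ≥ 1}` be homeomorphisms of `Q = [0,1]²` onto itself, equal
to the identity off `R = [1/3,2/3]²`, bi-Lipschitz with `[g_n]_Lip, [g_n⁻¹]_Lip ≤ c·n^p`,
and with `h_top(g_n) → ∞`.  Define `f = A_n ∘ g_n ∘ A_n⁻¹` on each `Q_n` and `f = id`
elsewhere.  Then `f` is an orientation-preserving homeomorphism of `ℝ²` (isotopic to the
identity through homeomorphisms), equal to the identity off `Q` and mapping `Q` onto `Q`;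
the restriction of `f` to `Q` has infinite topological entropy; there are `C, δ > 0` with
`|f(z)-f(w)| ≤ C·|z-w|·(log (1/|z-w|))^p` whenever `0 < |z-w| < δ`, and likewise for
`f⁻¹`; and `f`, `f⁻¹` are `α`-Hölder continuous for every `0 < α < 1`. -/
theorem infinite_entropy_holder_example (p c : ℝ) (hp : 0 < p) (hc : 0 < c)
    (g gi : ℕ → EuclideanSpace ℝ (Fin 2) → EuclideanSpace ℝ (Fin 2))
    (hbij : ∀ n, 1 ≤ n → Set.BijOn (g n) unitSq unitSq)
    (hcont : ∀ n, 1 ≤ n → ContinuousOn (g n) unitSq)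
    (hginv : ∀ n, 1 ≤ n → Set.InvOn (gi n) (g n) unitSq unitSq)
    (hsupp : ∀ n, 1 ≤ n → ∀ x ∈ unitSq \ midSq, g n x = x)
    (hlip : ∀ n : ℕ, 1 ≤ n → ∀ x ∈ unitSq, ∀ y ∈ unitSq,
      dist (g n x) (g n y) ≤ c * (n : ℝ) ^ p * dist x y)
    (hlipi : ∀ n : ℕ, 1 ≤ n → ∀ x ∈ unitSq, ∀ y ∈ unitSq,
      dist (gi n x) (gi n y) ≤ c * (n : ℝ) ^ p * dist x y)
    (hent : Tendsto (fun n => Dynamics.coverEntropy (g n) unitSq) atTop (nhds ⊤))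
    (f : EuclideanSpace ℝ (Fin 2) → EuclideanSpace ℝ (Fin 2))
    (hfdef : ∀ n, 1 ≤ n → ∀ x ∈ dyadicSq n, f x = affSq n (g n (affSqInv n x)))
    (hfid : ∀ x, (∀ n, 1 ≤ n → x ∉ dyadicSq n) → f x = x) :
    ∃ (fi : EuclideanSpace ℝ (Fin 2) → EuclideanSpace ℝ (Fin 2))
      (H : ℝ → EuclideanSpace ℝ (Fin 2) → EuclideanSpace ℝ (Fin 2)),
      Continuous f ∧ Continuous fi ∧
      Function.LeftInverse fi f ∧ Function.RightInverse fi f ∧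
      -- orientation preserving: `f` is isotopic to the identity through homeomorphisms
      Continuous (fun q : ℝ × EuclideanSpace ℝ (Fin 2) => H q.1 q.2) ∧
      (∀ x, H 0 x = x) ∧ (∀ x, H 1 x = f x) ∧
      (∀ t ∈ Set.Icc (0 : ℝ) 1, IsHomeomorph (H t)) ∧
      -- `f` is the identity off `Q` and maps `Q` onto `Q`
      (∀ x ∉ unitSq, f x = x) ∧ f '' unitSq = unitSq ∧
      -- the restriction of `f` to `Q` has infinite topological entropy
      Dynamics.coverEntropy f unitSq = ⊤ ∧
      -- modulus of continuity `Λ_p(t) = t |log t|^p` for `f` and `f⁻¹`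
      (∃ C δ : ℝ, 0 < C ∧ 0 < δ ∧ ∀ z w, 0 < dist z w → dist z w < δ →
        dist (f z) (f w) ≤ C * dist z w * Real.log (1 / dist z w) ^ p ∧
        dist (fi z) (fi w) ≤ C * dist z w * Real.log (1 / dist z w) ^ p) ∧
      -- `f` and `f⁻¹` are `α`-Hölder continuous for every `0 < α < 1`
      (∀ α : ℝ, 0 < α → α < 1 → ∃ K : ℝ, 0 < K ∧ ∀ z w, dist z w ≤ 1 →
        dist (f z) (f w) ≤ K * dist z w ^ α ∧ dist (fi z) (fi w) ≤ K * dist z w ^ α) :=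
  infinite_entropy_holder_example_general p c hp hc g gi hbij hginv hsupp hlip hlipi hent f hfdef
    hfid
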